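/- arXiv:2508.02367 — 4 statements merged into one kernel-verified Lean document; each statement's English description precedes it below -/
import Mathlib

section
/- Let H be a complex vector space with a nondegenerate Hermitian form B (antilinear in the first variable), and let π be a representation of a group G on H preserving B. Let f, h ∈ H with B(f, h) = 0, and suppose g ∈ G satisfies π(g)f = α·f + (1−α²)·h and π(g)h = f − α·h for some α ∈ ℂ. If B(h,h) ≠ 0, then B(f,f) = (1 − |α|²)·B(h,h) and moreover ᾱ = α, i.e., α ∈ ℝ. -/
/-!
Because `B f h = 0`, the form is diagonal on `span {f, h}`:
`B (a f + b h) (c f + d h) = conj a * c * B f f + conj b * d * B h h`.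
Invariance of `B` on `(h, h)` then yields `B f f = (1 - |α|²) B h h`, and invariance on `(f, h)`,
together with `B f h = 0`, reduces to `(conj α - α) * B h h = 0`.
-/

open ComplexConjugate

section HermitianForm

variable {H : Type*} [AddCommGroup H] [Module ℂ H] (B : H → H → ℂ)

theorem form_smul_left (hsmul : ∀ (c : ℂ) (v w : H), B v (c • w) = c * B v w)
    (hherm : ∀ v w : H, B v w = conj (B w v)) (c : ℂ) (v w : H) :
    B (c • v) w = conj c * B v w := by
  rw [hherm, hsmul, map_mul, ← hherm]

theorem form_add_smul_add_smul_of_orthogonal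
    (haddl : ∀ v w u : H, B (v + w) u = B v u + B w u)
    (haddr : ∀ v w u : H, B v (w + u) = B v w + B v u)
    (hsmul : ∀ (c : ℂ) (v w : H), B v (c • w) = c * B v w)
    (hherm : ∀ v w : H, B v w = conj (B w v))
    {f h : H} (horth : B f h = 0) (a b c d : ℂ) :
    B (a • f + b • h) (c • f + d • h) = conj a * c * B f f + conj b * d * B h h := by
  have hhf : B h f = 0 := by rw [hherm, horth, map_zero]
  simp only [haddl, haddr, hsmul, form_smul_left B hsmul hherm, horth, hhf]
  ring

end HermitianForm

theorem stmt_7_general {G : Type*} [Group G] {H : Type*} [AddCommGroup H] [Module ℂ H]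
    (B : H → H → ℂ)
    (haddl : ∀ v w u : H, B (v + w) u = B v u + B w u)
    (haddr : ∀ v w u : H, B v (w + u) = B v w + B v u)
    (hsmul : ∀ (c : ℂ) (v w : H), B v (c • w) = c * B v w)
    (hherm : ∀ v w : H, B v w = conj (B w v))
    (π : Representation ℂ G H)
    (hinv : ∀ (g : G) (v w : H), B (π g v) (π g w) = B v w)
    (f h : H) (α : ℂ) (g : G)
    (horth : B f h = 0)
    (hgf : π g f = α • f + (1 - α ^ 2) • h)
    (hgh : π g h = f - α • h)
    (hne : B h h ≠ 0) :
    B f f = (1 - conj α * α) * B h h ∧ conj α = α := by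
  have hexpand := form_add_smul_add_smul_of_orthogonal B haddl haddr hsmul hherm horth
  have hgh' : π g h = (1 : ℂ) • f + (-α) • h := by rw [hgh]; module
  have hhh := hinv g h h
  rw [hgh', hexpand, map_one, map_neg] at hhh
  have hff : B f f = (1 - conj α * α) * B h h := by linear_combination hhh
  have hfh := hinv g f h
  rw [hgf, hgh', hexpand, horth, map_sub, map_one, map_pow] at hfh
  have hreal : (conj α - α) * B h h = 0 := by linear_combination hfh - conj α * hff
  exact ⟨hff, sub_eq_zero.mp ((mul_eq_zero.mp hreal).resolve_right hne)⟩

/-- Algebraic core of Lemma 5.3: if `g` acts on `span{f,h}` by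
`g·f = α f + (1−α²) h`, `g·h = f − α h` and preserves the nondegenerate Hermitian
form `B` with `B f h = 0` and `B h h ≠ 0`, then `B f f = (1 − |α|²) B h h` and `α`
is real. -/
theorem stmt_7 {G : Type*} [Group G] {H : Type*} [AddCommGroup H] [Module ℂ H]
    (B : H → H → ℂ)
    (haddl : ∀ v w u : H, B (v + w) u = B v u + B w u)
    (haddr : ∀ v w u : H, B v (w + u) = B v w + B v u)
    (hsmul : ∀ (c : ℂ) (v w : H), B v (c • w) = c * B v w)
    (hherm : ∀ v w : H, B v w = conj (B w v))
    (hnondeg : ∀ v : H, (∀ w : H, B v w = 0) → v = 0)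
    (π : Representation ℂ G H)
    (hinv : ∀ (g : G) (v w : H), B (π g v) (π g w) = B v w)
    (f h : H) (α : ℂ) (g : G)
    (horth : B f h = 0)
    (hgf : π g f = α • f + (1 - α ^ 2) • h)
    (hgh : π g h = f - α • h)
    (hne : B h h ≠ 0) :
    B f f = (1 - conj α * α) * B h h ∧ conj α = α :=
  stmt_7_general B haddl haddr hsmul hherm π hinv f h α g horth hgf hgh hne
end

section
/- Let H be a complex vector space with a Hermitian form B (antilinear in the first variable), and π a representation of G on H preserving B. Let f, h ∈ H with B(f,h) = 0 and B(f,f) ≠ 0, and suppose g ∈ G satisfies π(g)f = α·f + (1−α)·h and π(g)h = (1+α)·f − α·h for some α ∈ ℂ. Then |1−α|²·B(h,h) = (1−|α|²)·B(f,f), and ᾱ(1+α)·B(f,f) = (1−ᾱ)·α·B(h,h); together these imply ᾱ = α, i.e., α ∈ ℝ. -/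
open ComplexConjugate

section HermitianForm

variable {H : Type*} [AddCommGroup H] (B : H → H → ℂ)

theorem hermitian_add_left (haddr : ∀ v w u : H, B v (w + u) = B v w + B v u)
    (hherm : ∀ v w : H, B v w = conj (B w v)) (v w u : H) :
    B (v + w) u = B v u + B w u := by
  rw [hherm, haddr, map_add, ← hherm, ← hherm]

theorem hermitian_smul_left [Module ℂ H] (hsmul : ∀ (c : ℂ) (v w : H), B v (c • w) = c * B v w)
    (hherm : ∀ v w : H, B v w = conj (B w v)) (c : ℂ) (v w : H) :
    B (c • v) w = conj c * B v w := by
  rw [hherm, hsmul, map_mul, ← hherm]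

theorem hermitian_apply_combination_of_orthogonal [Module ℂ H]
    (haddr : ∀ v w u : H, B v (w + u) = B v w + B v u)
    (hsmul : ∀ (c : ℂ) (v w : H), B v (c • w) = c * B v w)
    (hherm : ∀ v w : H, B v w = conj (B w v))
    {f h : H} (horth : B f h = 0) (a b c d : ℂ) :
    B (a • f + b • h) (c • f + d • h) = conj a * c * B f f + conj b * d * B h h := by
  have horth' : B h f = 0 := by rw [hherm, horth, map_zero]
  simp only [hermitian_add_left B haddr hherm, hermitian_smul_left B hsmul hherm, haddr, hsmul,
    horth, horth']
  ring

end HermitianForm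

theorem conj_eq_self_of_norm_equations {α x y : ℂ} (hx : x ≠ 0)
    (hf : conj α * α * x + conj (1 - α) * (1 - α) * y = x)
    (hh : conj (1 + α) * (1 + α) * x + conj (-α) * (-α) * y = y) :
    conj α = α := by
  simp only [map_sub, map_add, map_neg, map_one] at hf hh
  -- eliminating `y` between the two equations
  have hsq : (α - conj α) ^ 2 * x = 0 := by
    linear_combination (conj α * α - 1) * hf + (conj α - 1) * (1 - α) * hh
  have hdiff := pow_eq_zero_iff two_ne_zero |>.mp ((mul_eq_zero.mp hsq).resolve_right hx)
  exact (sub_eq_zero.mp hdiff).symm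

theorem stmt_8_general {G : Type*} [Group G] {H : Type*} [AddCommGroup H] [Module ℂ H]
    (B : H → H → ℂ)
    (haddr : ∀ v w u : H, B v (w + u) = B v w + B v u)
    (hsmul : ∀ (c : ℂ) (v w : H), B v (c • w) = c * B v w)
    (hherm : ∀ v w : H, B v w = conj (B w v))
    (π : Representation ℂ G H)
    (hinv : ∀ (g : G) (v w : H), B (π g v) (π g w) = B v w)
    (f h : H) (α : ℂ) (g : G)
    (horth : B f h = 0)
    (hgf : π g f = α • f + (1 - α) • h)
    (hgh : π g h = (1 + α) • f - α • h)
    (hne : B f f ≠ 0) :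
    conj (1 - α) * (1 - α) * B h h = (1 - conj α * α) * B f f ∧
      conj α * (1 + α) * B f f = (1 - conj α) * α * B h h ∧
      conj α = α := by
  have hgh' : π g h = (1 + α) • f + (-α) • h := by rw [hgh, sub_eq_add_neg, neg_smul]
  have hcomb := hermitian_apply_combination_of_orthogonal B haddr hsmul hherm horth
  have hff := hinv g f f
  have hfh := hinv g f h
  have hhh := hinv g h h
  rw [hgf, hcomb] at hff
  rw [hgf, hgh', hcomb, horth] at hfh
  rw [hgh', hcomb] at hhh
  refine ⟨by linear_combination hff, ?_, conj_eq_self_of_norm_equations hne hff hhh⟩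
  simp only [map_sub, map_one] at hfh
  linear_combination hfh

/-- Computational heart of Lemma 6.4 (non-transitive case): if `g` acts on
`span{f,h}` by `g·f = α f + (1−α) h`, `g·h = (1+α) f − α h` and preserves the
Hermitian form `B`, with `B f h = 0` and `B f f ≠ 0`, then
`|1−α|² B h h = (1−|α|²) B f f`, `ᾱ(1+α) B f f = (1−ᾱ) α B h h`, and `α` is real. -/
theorem stmt_8 {G : Type*} [Group G] {H : Type*} [AddCommGroup H] [Module ℂ H]
    (B : H → H → ℂ)
    (haddl : ∀ v w u : H, B (v + w) u = B v u + B w u)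
    (haddr : ∀ v w u : H, B v (w + u) = B v w + B v u)
    (hsmul : ∀ (c : ℂ) (v w : H), B v (c • w) = c * B v w)
    (hherm : ∀ v w : H, B v w = conj (B w v))
    (π : Representation ℂ G H)
    (hinv : ∀ (g : G) (v w : H), B (π g v) (π g w) = B v w)
    (f h : H) (α : ℂ) (g : G)
    (horth : B f h = 0)
    (hgf : π g f = α • f + (1 - α) • h)
    (hgh : π g h = (1 + α) • f - α • h)
    (hne : B f f ≠ 0) :
    conj (1 - α) * (1 - α) * B h h = (1 - conj α * α) * B f f ∧
      conj α * (1 + α) * B f f = (1 - conj α) * α * B h h ∧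
      conj α = α :=
  stmt_8_general B haddr hsmul hherm π hinv f h α g horth hgf hgh hne
end

section
/- Let d ≥ 3 and α ∈ ℝ. Let f, h span a 2-dimensional real vector space, and let g act by g·f = α·f + (1−α²)·h, g·h = f − α·h. Let Q be the bilinear form with Q(f,f) = (d/(d−1))(1−α²), Q(h,h) = d/(d−1), Q(f,h) = 0. Then g preserves Q: Q(g·f, g·f) = Q(f,f), Q(g·h, g·h) = Q(h,h), and Q(g·f, g·h) = 0. Moreover g² acts as the identity on span{f,h}. -/
/-!
In the basis `(f, h)` the map `g` has matrix `[[α, 1], [1 - α², -α]]`, whose square is the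
identity, and `Q` is diagonal with entries `c (1 - α²)` and `c`. Since `f ⟂ h`, evaluating `Q` on
combinations of `f` and `h` only involves the diagonal, and each identity reduces to a polynomial
identity in `α` and `c`.
-/

section SpanInvolution

variable {V : Type*} [AddCommGroup V] [Module ℝ V] {α : ℝ} {f h : V} {g : V →ₗ[ℝ] V}

theorem bilin_combination_of_orthogonal (Q : V →ₗ[ℝ] V →ₗ[ℝ] ℝ) (hfh : Q f h = 0)
    (hhf : Q h f = 0) (a b a' b' : ℝ) :
    Q (a • f + b • h) (a' • f + b' • h) = a * a' * Q f f + b * b' * Q h h := by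
  simp only [map_add, map_smul, LinearMap.add_apply, LinearMap.smul_apply, smul_eq_mul, hfh, hhf]
  ring

theorem apply_apply_left_of_span (hgf : g f = α • f + (1 - α ^ 2) • h) (hgh : g h = f - α • h) :
    g (g f) = f := by
  rw [hgf, map_add, map_smul, map_smul, hgf, hgh]
  module

theorem apply_apply_right_of_span (hgf : g f = α • f + (1 - α ^ 2) • h) (hgh : g h = f - α • h) :
    g (g h) = h := by
  rw [hgh, map_sub, map_smul, hgf, hgh]
  module

theorem apply_right_eq_combination (hgh : g h = f - α • h) : g h = (1 : ℝ) • f + (-α) • h := by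
  rw [hgh]
  module

variable {Q : V →ₗ[ℝ] V →ₗ[ℝ] ℝ} {c : ℝ}

theorem bilin_apply_left_left_of_span (hgf : g f = α • f + (1 - α ^ 2) • h)
    (hQff : Q f f = c * (1 - α ^ 2)) (hQhh : Q h h = c) (hQfh : Q f h = 0) (hQhf : Q h f = 0) :
    Q (g f) (g f) = Q f f := by
  rw [hgf, bilin_combination_of_orthogonal Q hQfh hQhf, hQff, hQhh]
  ring

theorem bilin_apply_right_right_of_span (hgh : g h = f - α • h)
    (hQff : Q f f = c * (1 - α ^ 2)) (hQhh : Q h h = c) (hQfh : Q f h = 0) (hQhf : Q h f = 0) :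
    Q (g h) (g h) = Q h h := by
  rw [apply_right_eq_combination hgh, bilin_combination_of_orthogonal Q hQfh hQhf, hQff, hQhh]
  ring

theorem bilin_apply_left_right_of_span (hgf : g f = α • f + (1 - α ^ 2) • h)
    (hgh : g h = f - α • h)
    (hQff : Q f f = c * (1 - α ^ 2)) (hQhh : Q h h = c) (hQfh : Q f h = 0) (hQhf : Q h f = 0) :
    Q (g f) (g h) = 0 := by
  rw [hgf, apply_right_eq_combination hgh, bilin_combination_of_orthogonal Q hQfh hQhf, hQff,
    hQhh]
  ring

end SpanInvolution

theorem stmt_11_general {V : Type*} [AddCommGroup V] [Module ℝ V]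
    (d : ℕ) (α : ℝ) (f h : V) (g : V →ₗ[ℝ] V)
    (Q : V →ₗ[ℝ] V →ₗ[ℝ] ℝ)
    (hQsymm : ∀ v w : V, Q v w = Q w v)
    (hgf : g f = α • f + (1 - α ^ 2) • h)
    (hgh : g h = f - α • h)
    (hQff : Q f f = ((d : ℝ) / ((d : ℝ) - 1)) * (1 - α ^ 2))
    (hQhh : Q h h = (d : ℝ) / ((d : ℝ) - 1))
    (hQfh : Q f h = 0) :
    Q (g f) (g f) = Q f f ∧ Q (g h) (g h) = Q h h ∧ Q (g f) (g h) = 0 ∧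
      g (g f) = f ∧ g (g h) = h := by
  have hQhf : Q h f = 0 := hQsymm f h ▸ hQfh
  exact ⟨bilin_apply_left_left_of_span hgf hQff hQhh hQfh hQhf,
    bilin_apply_right_right_of_span hgh hQff hQhh hQfh hQhf,
    bilin_apply_left_right_of_span hgf hgh hQff hQhh hQfh hQhf,
    apply_apply_left_of_span hgf hgh, apply_apply_right_of_span hgf hgh⟩

/-- The invariant form `Q` of Section 5, restricted to `span{f,h}`, is preserved by
the order-two element `g`, and `g²` acts as the identity on `span{f,h}`. -/
theorem stmt_11 {V : Type*} [AddCommGroup V] [Module ℝ V]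
    (d : ℕ) (hd : 3 ≤ d) (α : ℝ) (f h : V) (g : V →ₗ[ℝ] V)
    (Q : V →ₗ[ℝ] V →ₗ[ℝ] ℝ)
    (hQsymm : ∀ v w : V, Q v w = Q w v)
    (hgf : g f = α • f + (1 - α ^ 2) • h)
    (hgh : g h = f - α • h)
    (hQff : Q f f = ((d : ℝ) / ((d : ℝ) - 1)) * (1 - α ^ 2))
    (hQhh : Q h h = (d : ℝ) / ((d : ℝ) - 1))
    (hQfh : Q f h = 0) :
    Q (g f) (g f) = Q f f ∧ Q (g h) (g h) = Q h h ∧ Q (g f) (g h) = 0 ∧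
      g (g f) = f ∧ g (g h) = h :=
  stmt_11_general d α f h g Q hQsymm hgf hgh hQff hQhh hQfh
end

section
/- Let G ≤ Aut(T) act transitively on the vertices of a tree T and let o be a vertex with stabilizer K. Then for every vertex v, the double coset K g K (where g·o = v) equals {h ∈ G : d(h·o, o) = d(v, o)}, provided K acts transitively on each sphere Sₙ around o. Consequently, d(g⁻¹·o, o) = d(o, g·o) implies g⁻¹ ∈ K g K for every g ∈ G. -/
/-!
Since `K` is the stabilizer of `o`, `h ∈ K g K` exactly when `h • o` and `g • o` lie in the
same `K`-orbit. Transitivity of `K` on spheres identifies these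
orbits with the spheres around `o`, which gives the description of `K g K`. Finally `g⁻¹ • o`
and `g • o` lie on the same sphere, since `g` maps the pair `(o, g⁻¹ • o)` to `(g • o, o)`.
-/

open MulAction

section InvariantFunction

variable {G V β : Type*} [Group G] [MulAction G V]

theorem exists_stabilizer_mul_mul_iff_exists_smul_eq {o : V} {g h : G} :
    (∃ k₁ ∈ stabilizer G o, ∃ k₂ ∈ stabilizer G o, h = k₁ * g * k₂) ↔
      ∃ k ∈ stabilizer G o, k • h • o = g • o := by
  constructor
  · rintro ⟨k₁, hk₁, k₂, hk₂, rfl⟩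
    refine ⟨k₁⁻¹, inv_mem hk₁, ?_⟩
    rw [mul_smul, mul_smul, mem_stabilizer_iff.mp hk₂, inv_smul_smul]
  · rintro ⟨k, hk, hkh⟩
    refine ⟨k⁻¹, inv_mem hk, g⁻¹ * k * h, ?_, by group⟩
    rw [mem_stabilizer_iff, mul_smul, mul_smul, hkh, inv_smul_smul]

theorem exists_stabilizer_smul_eq_iff {d : V → V → β}
    (hd : ∀ (g : G) (u v : V), d (g • u) (g • v) = d u v) {o : V}
    (hsph : ∀ u w : V, d o u = d o w → ∃ k ∈ stabilizer G o, k • u = w) {u w : V} :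
    (∃ k ∈ stabilizer G o, k • u = w) ↔ d o u = d o w := by
  refine ⟨?_, hsph u w⟩
  rintro ⟨k, hk, rfl⟩
  rw [← hd k, mem_stabilizer_iff.mp hk]

theorem apply_inv_smul_eq {d : V → V → β}
    (hd : ∀ (g : G) (u v : V), d (g • u) (g • v) = d u v) (o : V) (g : G) :
    d o (g⁻¹ • o) = d (g • o) o := by
  rw [← hd g, smul_inv_smul]

end InvariantFunction

theorem stmt_17_general {V : Type*} (T : SimpleGraph V)
    {G : Type*} [Group G] [MulAction G V]
    (hiso : ∀ (g : G) (u v : V), T.dist (g • u) (g • v) = T.dist u v)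
    (o : V)
    (K : Subgroup G) (hK : K = MulAction.stabilizer G o)
    (hsph : ∀ u w : V, T.dist o u = T.dist o w → ∃ k ∈ K, k • u = w) :
    (∀ (g : G) (v : V), g • o = v →
      {h : G | T.dist (h • o) o = T.dist v o} =
        {h : G | ∃ k₁ ∈ K, ∃ k₂ ∈ K, h = k₁ * g * k₂}) ∧
      ∀ g : G, ∃ k₁ ∈ K, ∃ k₂ ∈ K, g⁻¹ = k₁ * g * k₂ := by
  subst hK
  have hdoset (g h : G) :
      (∃ k₁ ∈ stabilizer G o, ∃ k₂ ∈ stabilizer G o, h = k₁ * g * k₂) ↔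
        T.dist o (h • o) = T.dist o (g • o) := by
    rw [exists_stabilizer_mul_mul_iff_exists_smul_eq, exists_stabilizer_smul_eq_iff hiso hsph]
  refine ⟨?_, fun g => ?_⟩
  · rintro g v rfl
    ext h
    rw [Set.mem_ofPred, Set.mem_ofPred, hdoset, T.dist_comm (u := h • o), T.dist_comm (u := g • o)]
  · rw [hdoset, apply_inv_smul_eq hiso, T.dist_comm]

/-- Amann's criterion: if `G` acts transitively by isometries on (the vertices of) a
tree `T` and the stabilizer `K` of a base vertex `o` acts transitively on each sphere
around `o`, then for every vertex `v` and every `g` with `g • o = v`, the double coset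
`K g K` is exactly `{h : d(h•o, o) = d(v, o)}`; consequently `g⁻¹ ∈ K g K` for all `g`. -/
theorem stmt_17 {V : Type*} (T : SimpleGraph V) (hconn : T.Connected)
    (hacyc : T.IsAcyclic)
    {G : Type*} [Group G] [MulAction G V]
    (hiso : ∀ (g : G) (u v : V), T.dist (g • u) (g • v) = T.dist u v)
    (o : V)
    (htrans : ∀ v : V, ∃ g : G, g • o = v)
    (K : Subgroup G) (hK : K = MulAction.stabilizer G o)
    (hsph : ∀ u w : V, T.dist o u = T.dist o w → ∃ k ∈ K, k • u = w) :
    (∀ (g : G) (v : V), g • o = v →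
      {h : G | T.dist (h • o) o = T.dist v o} =
        {h : G | ∃ k₁ ∈ K, ∃ k₂ ∈ K, h = k₁ * g * k₂}) ∧
      ∀ g : G, ∃ k₁ ∈ K, ∃ k₂ ∈ K, g⁻¹ = k₁ * g * k₂ :=
  stmt_17_general T hiso o K hK hsph
end
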